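/- Let d > 0 be a real number, x₀ ∈ ℝ, and let n : ℝ → ℝ be continuous and integrable with n(ξ) ≤ 0 for all ξ ≤ x₀ and n(ξ) ≥ 0 for all ξ ≥ x₀. Set v := p_d ∗ n. Then v is differentiable and: v'(x) ≥ −(1/√d)·v(x) for every x ≥ x₀; v'(x) ≥ (1/√d)·v(x) for every x ≤ x₀; consequently v'(x) ≥ −(1/√d)·|v(x)| for every x ∈ ℝ. -/

import Mathlib

/-!
Split `v = p_d ∗ n` at the point `x` into the contributions `L(x)` of `ξ ≤ x` and `R(x)` of
`ξ > x`. On each side the kernel `p_d(x - ξ)` factors into an exponential in `x` times one in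
`ξ`, so `L' = n(x)/(2√d) - L/√d` and `R' = R/√d - n(x)/(2√d)`, whence `v' = (R - L)/√d`.
Thus `v' + v/√d = 2R/√d`, which is `≥ 0` for `x ≥ x₀` because `n ≥ 0` to the right of `x`,
and `v' - v/√d = -2L/√d`, which is `≥ 0` for `x ≤ x₀` because `n ≤ 0` to the left of `x`.
-/

/-- The kernel `p_d(x) = (1/(2√d)) exp(-|x|/√d)`. -/
noncomputable def pd (d : ℝ) (x : ℝ) : ℝ :=
  1 / (2 * Real.sqrt d) * Real.exp (-|x| / Real.sqrt d)

open MeasureTheory Set Real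

theorem hasDerivAt_integral_Iic {g : ℝ → ℝ} (hg : Continuous g)
    (hint : ∀ b, IntegrableOn g (Iic b)) (x : ℝ) :
    HasDerivAt (fun y => ∫ ξ in Iic y, g ξ) (g x) x := by
  have h : (fun y => ∫ ξ in Iic y, g ξ) = fun y => (∫ ξ in Iic 0, g ξ) + ∫ ξ in 0..y, g ξ := by
    funext y
    rw [← intervalIntegral.integral_Iic_sub_Iic (hint 0) (hint y), add_sub_cancel]
  rw [h]
  exact (hg.integral_hasStrictDerivAt 0 x).hasDerivAt.const_add _

theorem hasDerivAt_integral_Ioi {g : ℝ → ℝ} (hg : Continuous g)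
    (hint : ∀ b, IntegrableOn g (Ioi b)) (x : ℝ) :
    HasDerivAt (fun y => ∫ ξ in Ioi y, g ξ) (-g x) x := by
  have h : (fun y => ∫ ξ in Ioi y, g ξ) = fun y => (∫ ξ in Ioi 0, g ξ) - ∫ ξ in 0..y, g ξ := by
    funext y
    rw [← intervalIntegral.integral_Ioi_sub_Ioi' (hint 0) (hint y), sub_sub_cancel]
  rw [h]
  exact (hg.integral_hasStrictDerivAt 0 x).hasDerivAt.const_sub _

section ExpWeight

variable {n : ℝ → ℝ} {s : ℝ}

theorem integrableOn_Iic_exp_div_mul (hn : Integrable n) (hs : 0 ≤ s) (b : ℝ) :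
    IntegrableOn (fun ξ => exp (ξ / s) * n ξ) (Iic b) := by
  refine hn.integrableOn.bdd_mul (c := exp (b / s)) (by fun_prop) ?_
  filter_upwards [ae_restrict_mem measurableSet_Iic] with ξ hξ
  rw [norm_of_nonneg (exp_pos _).le]
  exact exp_le_exp.mpr (div_le_div_of_nonneg_right hξ hs)

theorem integrableOn_Ioi_exp_neg_div_mul (hn : Integrable n) (hs : 0 ≤ s) (b : ℝ) :
    IntegrableOn (fun ξ => exp (-ξ / s) * n ξ) (Ioi b) := by
  refine hn.integrableOn.bdd_mul (c := exp (-b / s)) (by fun_prop) ?_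
  filter_upwards [ae_restrict_mem measurableSet_Ioi] with ξ hξ
  rw [norm_of_nonneg (exp_pos _).le]
  exact exp_le_exp.mpr (div_le_div_of_nonneg_right (neg_le_neg (le_of_lt hξ)) hs)

end ExpWeight

section Kernel

variable (d : ℝ)

theorem pd_nonneg (x : ℝ) : 0 ≤ pd d x := by
  unfold pd
  positivity

theorem pd_le (x : ℝ) : pd d x ≤ 1 / (2 * √d) := by
  unfold pd
  refine mul_le_of_le_one_right (by positivity) (exp_le_one_iff.mpr ?_)
  exact div_nonpos_of_nonpos_of_nonneg (neg_nonpos.mpr (abs_nonneg x)) (sqrt_nonneg d)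

theorem continuous_pd : Continuous (pd d) := by
  unfold pd
  fun_prop

variable {d}

theorem pd_sub_of_le {x ξ : ℝ} (h : ξ ≤ x) :
    pd d (x - ξ) = 1 / (2 * √d) * exp (-x / √d) * exp (ξ / √d) := by
  rw [pd, abs_of_nonneg (sub_nonneg.mpr h), mul_assoc, ← exp_add]
  ring_nf

theorem pd_sub_of_ge {x ξ : ℝ} (h : x ≤ ξ) :
    pd d (x - ξ) = 1 / (2 * √d) * exp (x / √d) * exp (-ξ / √d) := by
  rw [pd, abs_of_nonpos (sub_nonpos.mpr h), mul_assoc, ← exp_add]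
  ring_nf

theorem integrable_pd_sub_mul {n : ℝ → ℝ} (hn : Integrable n) (x : ℝ) :
    Integrable (fun ξ => pd d (x - ξ) * n ξ) :=
  hn.bdd_mul (c := 1 / (2 * √d)) ((continuous_pd d).comp (by fun_prop)).aestronglyMeasurable
    (.of_forall fun ξ => by rw [norm_of_nonneg (pd_nonneg d _)]; exact pd_le d _)

end Kernel

noncomputable def pdConvLeft (d : ℝ) (n : ℝ → ℝ) (x : ℝ) : ℝ :=
  ∫ ξ in Iic x, pd d (x - ξ) * n ξ

noncomputable def pdConvRight (d : ℝ) (n : ℝ → ℝ) (x : ℝ) : ℝ :=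
  ∫ ξ in Ioi x, pd d (x - ξ) * n ξ

section OneSided

variable {d : ℝ} {n : ℝ → ℝ}

theorem pdConvLeft_add_pdConvRight (hn : Integrable n) (x : ℝ) :
    pdConvLeft d n x + pdConvRight d n x = ∫ ξ, pd d (x - ξ) * n ξ :=
  intervalIntegral.integral_Iic_add_Ioi (integrable_pd_sub_mul hn x).integrableOn
    (integrable_pd_sub_mul hn x).integrableOn

theorem pdConvLeft_eq (x : ℝ) :
    pdConvLeft d n x = 1 / (2 * √d) * exp (-x / √d) * ∫ ξ in Iic x, exp (ξ / √d) * n ξ := by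
  rw [pdConvLeft, ← integral_const_mul]
  refine setIntegral_congr_fun measurableSet_Iic fun ξ hξ => ?_
  rw [pd_sub_of_le hξ]
  ring

theorem pdConvRight_eq (x : ℝ) :
    pdConvRight d n x = 1 / (2 * √d) * exp (x / √d) * ∫ ξ in Ioi x, exp (-ξ / √d) * n ξ := by
  rw [pdConvRight, ← integral_const_mul]
  refine setIntegral_congr_fun measurableSet_Ioi fun ξ hξ => ?_
  rw [pd_sub_of_ge (le_of_lt hξ)]
  ring

theorem hasDerivAt_pdConvLeft (hc : Continuous n) (hn : Integrable n) (x : ℝ) :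
    HasDerivAt (pdConvLeft d n) (n x / (2 * √d) - pdConvLeft d n x / √d) x := by
  have hexp : HasDerivAt (fun y => exp (-y / √d)) (exp (-x / √d) * (-1 / √d)) x :=
    ((hasDerivAt_neg x).div_const _).exp
  have hint := hasDerivAt_integral_Iic (by fun_prop) (integrableOn_Iic_exp_div_mul hn
    (sqrt_nonneg d)) x
  rw [show pdConvLeft d n = _ from funext pdConvLeft_eq]
  refine ((hexp.const_mul (1 / (2 * √d))).mul hint).congr_deriv ?_
  have hexp_mul : exp (-x / √d) * exp (x / √d) = 1 := by
    rw [← exp_add, neg_div, neg_add_cancel, exp_zero]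
  beta_reduce
  linear_combination n x / (2 * √d) * hexp_mul

theorem hasDerivAt_pdConvRight (hc : Continuous n) (hn : Integrable n) (x : ℝ) :
    HasDerivAt (pdConvRight d n) (pdConvRight d n x / √d - n x / (2 * √d)) x := by
  have hexp : HasDerivAt (fun y => exp (y / √d)) (exp (x / √d) * (1 / √d)) x :=
    ((hasDerivAt_id x).div_const _).exp
  have hint := hasDerivAt_integral_Ioi (by fun_prop) (integrableOn_Ioi_exp_neg_div_mul hn
    (sqrt_nonneg d)) x
  rw [show pdConvRight d n = _ from funext pdConvRight_eq]
  refine ((hexp.const_mul (1 / (2 * √d))).mul hint).congr_deriv ?_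
  have hexp_mul : exp (x / √d) * exp (-x / √d) = 1 := by
    rw [← exp_add, neg_div, add_neg_cancel, exp_zero]
  beta_reduce
  linear_combination -(n x / (2 * √d)) * hexp_mul

theorem pdConvLeft_nonpos {x : ℝ} (h : ∀ ξ, ξ ≤ x → n ξ ≤ 0) : pdConvLeft d n x ≤ 0 :=
  setIntegral_nonpos measurableSet_Iic fun ξ hξ =>
    mul_nonpos_of_nonneg_of_nonpos (pd_nonneg d _) (h ξ hξ)

theorem pdConvRight_nonneg {x : ℝ} (h : ∀ ξ, x < ξ → 0 ≤ n ξ) : 0 ≤ pdConvRight d n x :=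
  setIntegral_nonneg measurableSet_Ioi fun ξ hξ => mul_nonneg (pd_nonneg d _) (h ξ hξ)

theorem hasDerivAt_integral_pd_sub_mul (hc : Continuous n) (hn : Integrable n) (x : ℝ) :
    HasDerivAt (fun x => ∫ ξ, pd d (x - ξ) * n ξ)
      (1 / √d * (pdConvRight d n x - pdConvLeft d n x)) x := by
  rw [← funext (pdConvLeft_add_pdConvRight (d := d) hn)]
  refine ((hasDerivAt_pdConvLeft hc hn x).add (hasDerivAt_pdConvRight hc hn x)).congr_deriv ?_
  ring

end OneSided

theorem deriv_convolution_sign_change_general (d : ℝ) (x₀ : ℝ) (n : ℝ → ℝ)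
    (hc : Continuous n) (hi : MeasureTheory.Integrable n)
    (hneg : ∀ ξ : ℝ, ξ ≤ x₀ → n ξ ≤ 0) (hpos : ∀ ξ : ℝ, x₀ ≤ ξ → 0 ≤ n ξ)
    (v : ℝ → ℝ) (hv : v = fun x => ∫ ξ : ℝ, pd d (x - ξ) * n ξ) :
    Differentiable ℝ v ∧
    (∀ x : ℝ, x₀ ≤ x → deriv v x ≥ -(1 / Real.sqrt d) * v x) ∧
    (∀ x : ℝ, x ≤ x₀ → deriv v x ≥ (1 / Real.sqrt d) * v x) ∧
    (∀ x : ℝ, deriv v x ≥ -(1 / Real.sqrt d) * |v x|) := by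
  have hderiv (x : ℝ) :
      HasDerivAt v (1 / √d * (pdConvRight d n x - pdConvLeft d n x)) x :=
    hv ▸ hasDerivAt_integral_pd_sub_mul hc hi x
  have hsplit (x : ℝ) : v x = pdConvLeft d n x + pdConvRight d n x := by
    rw [hv, pdConvLeft_add_pdConvRight hi]
  have hinv : 0 ≤ 1 / √d := by positivity
  have right (x : ℝ) (hx : x₀ ≤ x) : deriv v x ≥ -(1 / √d) * v x := by
    have hR := pdConvRight_nonneg (d := d) fun ξ hξ => hpos ξ (hx.trans hξ.le)
    rw [(hderiv x).deriv, hsplit]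
    nlinarith [mul_nonneg hinv hR]
  have left (x : ℝ) (hx : x ≤ x₀) : deriv v x ≥ 1 / √d * v x := by
    have hL := pdConvLeft_nonpos (d := d) fun ξ hξ => hneg ξ (hξ.trans hx)
    rw [(hderiv x).deriv, hsplit]
    nlinarith [mul_nonpos_of_nonneg_of_nonpos hinv hL]
  refine ⟨fun x => (hderiv x).differentiableAt, right, left, fun x => ?_⟩
  rcases le_total x x₀ with hx | hx
  · nlinarith [left x hx, mul_nonneg hinv (neg_le_iff_add_nonneg.mp (neg_abs_le (v x)))]
  · nlinarith [right x hx, mul_nonneg hinv (sub_nonneg.mpr (le_abs_self (v x)))]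

/-- **Key estimate of the second global existence case.** If `n` is continuous,
integrable, `n ≤ 0` on `(-∞, x₀]` and `n ≥ 0` on `[x₀, ∞)`, and `v := p_d ∗ n`, then
`v' ≥ -(1/√d) v` for `x ≥ x₀`, `v' ≥ (1/√d) v` for `x ≤ x₀`, and hence
`v' ≥ -(1/√d)|v|` everywhere. -/
theorem deriv_convolution_sign_change (d : ℝ) (hd : 0 < d) (x₀ : ℝ) (n : ℝ → ℝ)
    (hc : Continuous n) (hi : MeasureTheory.Integrable n)
    (hneg : ∀ ξ : ℝ, ξ ≤ x₀ → n ξ ≤ 0) (hpos : ∀ ξ : ℝ, x₀ ≤ ξ → 0 ≤ n ξ)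
    (v : ℝ → ℝ) (hv : v = fun x => ∫ ξ : ℝ, pd d (x - ξ) * n ξ) :
    Differentiable ℝ v ∧
    (∀ x : ℝ, x₀ ≤ x → deriv v x ≥ -(1 / Real.sqrt d) * v x) ∧
    (∀ x : ℝ, x ≤ x₀ → deriv v x ≥ (1 / Real.sqrt d) * v x) ∧
    (∀ x : ℝ, deriv v x ≥ -(1 / Real.sqrt d) * |v x|) :=
  deriv_convolution_sign_change_general d x₀ n hc hi hneg hpos v hv
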